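/- With S_n defined in the free ℚ-algebra on noncommuting generators Ψ_1, Ψ_2, … by S_0 = 1 and S_n = (1/n) Σ_{k=1}^n S_{n−k} Ψ_k for n ≥ 1, one has for every n ≥ 1: S_n = Σ_I Ψ^I / (i_1 (i_1+i_2) ⋯ (i_1+⋯+i_r)), where the sum ranges over all compositions I = (i_1, …, i_r) of n and Ψ^I = Ψ_{i_1} Ψ_{i_2} ⋯ Ψ_{i_r}. -/

import Mathlib

/-- The noncommutative complete symmetric functions `S_n` in the free `ℚ`-algebra on the
noncommutative power sums `Ψ_1, Ψ_2, …` (the generator `k` of `FreeAlgebra ℚ ℕ`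
standing for `Ψ_k`), defined by `S_0 = 1` and `S_n = (1/n) Σ_{k=1}^n S_{n−k} Ψ_k`. -/
noncomputable def S : ℕ → FreeAlgebra ℚ ℕ
  | 0 => 1
  | n + 1 =>
      ((n + 1 : ℚ))⁻¹ • ∑ k ∈ Finset.range (n + 1), S (n - k) * FreeAlgebra.ι ℚ (k + 1)
  decreasing_by exact Nat.lt_succ_of_le (Nat.sub_le n k)

/-- `Ψ^I = Ψ_{i_1} Ψ_{i_2} ⋯ Ψ_{i_r}`. -/
noncomputable def psi (I : List ℕ) : FreeAlgebra ℚ ℕ :=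
  (I.map (FreeAlgebra.ι ℚ)).prod

/-- `π_u(I) = i_1 (i_1+i_2) ⋯ (i_1+⋯+i_r)`, the product of the partial sums of `I`. -/
def partialSumsProd (I : List ℕ) : ℕ :=
  ((List.range I.length).map fun k => (I.take (k + 1)).sum).prod

/-! Group the compositions of `n + 1` by their last part `k + 1`. Appending `k + 1` to a
composition `J` of `n - k` multiplies `Ψ^J` on the right by `Ψ_{k+1}` and `π_u(J)` by the new
last partial sum `n + 1`, so the right-hand side satisfies the recursion defining `S`. -/

def compositions : ℕ → Finset (List ℕ)
  | 0 => {[]}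
  | n + 1 =>
      (Finset.range (n + 1)).biUnion fun k => (compositions (n - k)).image (· ++ [k + 1])
  decreasing_by exact Nat.lt_succ_of_le (Nat.sub_le n k)

theorem mem_compositions (n : ℕ) (I : List ℕ) :
    I ∈ compositions n ↔ (∀ i ∈ I, 0 < i) ∧ I.sum = n := by
  induction n using Nat.strong_induction_on generalizing I with
  | _ n ih =>
    match n with
    | 0 =>
      rw [compositions, Finset.mem_singleton]
      cases I with
      | nil => simp
      | cons a I => simp; omega
    | n + 1 =>
      rw [compositions]
      simp only [Finset.mem_biUnion, Finset.mem_range, Finset.mem_image]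
      rcases I.eq_nil_or_concat' with rfl | ⟨J, a, rfl⟩
      · simp
      · simp only [Order.lt_add_one_iff, ih _ (Nat.lt_succ_of_le (Nat.sub_le n _)),
          List.append_singleton_inj, existsAndEq, true_and, List.mem_append, List.mem_singleton,
          List.sum_append, List.sum_singleton]
        constructor
        · rintro ⟨k, hk, ⟨hJ, hsum⟩, rfl⟩
          exact ⟨fun i hi => hi.elim (hJ i) (by omega), by omega⟩
        · rintro ⟨hJ, hsum⟩
          have ha : 0 < a := hJ a (Or.inr rfl)
          exact ⟨a - 1, by omega, ⟨fun i hi => hJ i (Or.inl hi), by omega⟩, by omega⟩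

theorem pairwiseDisjoint_image_append_singleton {ι α : Type*} [DecidableEq α] (s : Set ι)
    (t : ι → Finset (List α)) {f : ι → α} (hf : Function.Injective f) :
    s.PairwiseDisjoint fun k => (t k).image (· ++ [f k]) := by
  intro k _ l _ hkl
  simp only [Function.onFun, Finset.disjoint_left, Finset.mem_image]
  rintro _ ⟨J, -, rfl⟩ ⟨J', -, h⟩
  exact hkl (hf (List.append_singleton_inj.1 h).2.symm)

theorem partialSumsProd_append_singleton (J : List ℕ) (a : ℕ) :
    partialSumsProd (J ++ [a]) = partialSumsProd J * (J.sum + a) := by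
  unfold partialSumsProd
  rw [List.length_append, List.length_singleton, List.range_succ, List.map_append,
    List.prod_append]
  congr 1
  · refine congrArg List.prod (List.map_congr_left fun k hk => ?_)
    rw [List.take_append_of_le_length (by grind)]
  · simp

theorem psi_append_singleton (J : List ℕ) (a : ℕ) :
    psi (J ++ [a]) = psi J * FreeAlgebra.ι ℚ a := by
  simp [psi]

theorem inv_partialSumsProd_smul_psi_append_singleton (J : List ℕ) (a : ℕ) :
    ((partialSumsProd (J ++ [a]) : ℚ))⁻¹ • psi (J ++ [a]) =
      ((J.sum + a : ℕ) : ℚ)⁻¹ • (((partialSumsProd J : ℚ))⁻¹ • psi J * FreeAlgebra.ι ℚ a) := by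
  rw [partialSumsProd_append_singleton, psi_append_singleton, Nat.cast_mul, mul_inv, mul_comm,
    mul_smul, smul_mul_assoc]

theorem S_eq_sum_compositions (n : ℕ) :
    S n = ∑ I ∈ compositions n, ((partialSumsProd I : ℚ))⁻¹ • psi I := by
  induction n using Nat.strong_induction_on with
  | _ n ih =>
    match n with
    | 0 => simp [S, compositions, partialSumsProd, psi]
    | n + 1 =>
      rw [S, compositions, Finset.sum_biUnion (pairwiseDisjoint_image_append_singleton _ _
        (add_left_injective 1)), Finset.smul_sum]
      refine Finset.sum_congr rfl fun k hk => ?_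
      rw [Finset.sum_image fun _ _ _ _ h => (List.append_singleton_inj.1 h).1,
        ih _ (Nat.lt_succ_of_le (Nat.sub_le n k)), Finset.sum_mul, Finset.smul_sum]
      refine Finset.sum_congr rfl fun J hJ => ?_
      rw [inv_partialSumsProd_smul_psi_append_singleton, ((mem_compositions _ J).1 hJ).2,
        show n - k + (k + 1) = n + 1 by grind, Nat.cast_succ]

theorem complete_in_terms_of_power_sums_general (n : ℕ) :
    S n = ∑ᶠ I ∈ {I : List ℕ | (∀ i ∈ I, 0 < i) ∧ I.sum = n},
      ((partialSumsProd I : ℚ))⁻¹ • psi I := by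
  have hset : {I : List ℕ | (∀ i ∈ I, 0 < i) ∧ I.sum = n} = ↑(compositions n) := by
    ext I
    simp [mem_compositions n I]
  rw [hset, finsum_mem_coe_finset, S_eq_sum_compositions]

/-- `S_n = Σ_{I ⊨ n} Ψ^I / (i_1 (i_1+i_2) ⋯ (i_1+⋯+i_r))`. -/
theorem complete_in_terms_of_power_sums (n : ℕ) (hn : 1 ≤ n) :
    S n = ∑ᶠ I ∈ {I : List ℕ | (∀ i ∈ I, 0 < i) ∧ I.sum = n},
      ((partialSumsProd I : ℚ))⁻¹ • psi I :=
  complete_in_terms_of_power_sums_general n
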